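/- Let a : ℕ → ℚ be the cubical Gromov coefficients: a(0)=1, a(1)=-1, a(2)=A, and 2·a(n) = -(∑_{k=0}^{n-2} a(k)·C(n-1,k)·2^{n-1-k} + ∑_{k=0}^{n-1} a(k)·C(n,k)·2^{n-k}) for n ≥ 3. Define c(j,d) = ∑_{k=j}^{d} 2^{-k}·C(d-j,d-k)·a(k). Then for all d ≥ 2 and 0 ≤ j ≤ d, c(j,d) = (-1)^d · c(d-j,d). -/

import Mathlib

/-!
Put `b k = a k / 2 ^ k`. Then `c(j, d) = ∑_{l ≤ d - j} C(d - j, l) b (j + l)` is the value at `j`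
of `(1 + S)^(d - j) b`, where `S` is the shift. These values `G(i, j)` obey Pascal's rule, so the
symmetry `G(i, j) = (-1)^(i + j) G(j, i)` follows by induction on `i` from its case `i = 0`:
`∑_k C(n, k) b k = (-1)^n b n`. For odd `n` this is the recursion, given the case `n - 1`; for even
`n` it follows from the smaller cases alone, by binomial inversion (Newton's forward-difference
formula).
-/

open Finset

section BinomSum

variable {R : Type*} [CommRing R]

def binomSum (b : ℕ → R) (i j : ℕ) : R :=
  ∑ k ∈ range (i + 1), (i.choose k : R) * b (j + k)

variable (b : ℕ → R)

@[simp]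
lemma binomSum_zero_left (j : ℕ) : binomSum b 0 j = b j := by
  simp [binomSum]

lemma binomSum_succ_left (i j : ℕ) :
    binomSum b (i + 1) j = binomSum b i j + binomSum b i (j + 1) := by
  simpa [binomSum, add_assoc, add_comm 1] using
    sum_choose_succ_mul (fun k _ => b (j + k)) i

lemma binomSum_eq_sum_range_add (n : ℕ) :
    binomSum b n 0 = ∑ k ∈ range n, (n.choose k : R) * b k + b n := by
  simp [binomSum, sum_range_succ]

lemma fwdDiff_iter_binomSum (n j : ℕ) :
    (fwdDiff 1)^[n] (fun i => binomSum b i j) = fun i => binomSum b i (j + n) := by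
  induction n with
  | zero => rfl
  | succ n ih =>
    ext i
    rw [Function.iterate_succ_apply', ih, fwdDiff, binomSum_succ_left, ← add_assoc]
    ring

lemma sum_alternating_binomSum (n : ℕ) :
    ∑ k ∈ range (n + 1), ((-1 : ℤ) ^ (n - k) * n.choose k) • binomSum b k 0 = b n := by
  simpa using (fwdDiff_iter_eq_sum_shift 1 (fun i => binomSum b i 0) n 0).symm.trans
    (congrFun (fwdDiff_iter_binomSum b n 0) 0)

lemma binomSum_symm (hb : ∀ n, binomSum b n 0 = (-1) ^ n * b n) (i j : ℕ) :
    binomSum b i j = (-1) ^ (i + j) * binomSum b j i := by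
  induction i generalizing j with
  | zero => simp [hb, ← mul_assoc, ← mul_pow]
  | succ i ih =>
    rw [binomSum_succ_left, ih, ih, ← add_assoc, binomSum_succ_left b j i]
    ring

lemma sum_Icc_choose_mul_eq_binomSum {j d : ℕ} (h : j ≤ d) :
    ∑ k ∈ Icc j d, ((d - j).choose (d - k) : R) * b k = binomSum b (d - j) j := by
  rw [← Finset.Ico_add_one_right_eq_Icc, sum_Ico_eq_sum_range, binomSum,
    Nat.sub_add_comm h]
  refine sum_congr rfl fun k hk => ?_
  rw [← Nat.choose_symm (Nat.lt_succ_iff.mp (mem_range.mp hk)), Nat.sub_sub]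

end BinomSum

lemma binomSum_zero_right_of_even {K : Type*} [Field K] [CharZero K] (b : ℕ → K) {n : ℕ}
    (hn : Even n) (hb : ∀ k < n, binomSum b k 0 = (-1) ^ k * b k) :
    binomSum b n 0 = b n := by
  -- for even `n`, inversion reads `b n = (binomSum b n 0 - b n) + binomSum b n 0`
  have key := sum_alternating_binomSum b n
  have hterm : ∀ k ∈ range n,
      ((-1 : ℤ) ^ (n - k) * n.choose k) • binomSum b k 0 = (n.choose k : K) * b k := by
    intro k hk
    have hk := mem_range.mp hk
    have hsign : (-1 : K) ^ (n - k) * (-1) ^ k = 1 := by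
      rw [← pow_add, Nat.sub_add_cancel hk.le, hn.neg_one_pow]
    rw [hb k hk, zsmul_eq_mul]
    push_cast
    linear_combination (n.choose k : K) * b k * hsign
  rw [sum_range_succ, sum_congr rfl hterm, Nat.sub_self, Nat.choose_self] at key
  simp only [pow_zero, Nat.cast_one, mul_one, one_smul] at key
  linear_combination (key + binomSum_eq_sum_range_add b n) / 2

lemma sum_range_mul_choose_mul_two_pow (a : ℕ → ℚ) (m : ℕ) :
    ∑ k ∈ range m, a k * (m.choose k : ℚ) * 2 ^ (m - k)
      = 2 ^ m * (binomSum (fun k => a k / 2 ^ k) m 0 - a m / 2 ^ m) := by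
  rw [binomSum_eq_sum_range_add, add_sub_cancel_right, mul_sum]
  refine sum_congr rfl fun k hk => ?_
  rw [← Nat.sub_add_cancel (mem_range.mp hk).le, pow_add, Nat.add_sub_cancel]
  field_simp

lemma binomSum_zero_right_of_recursion (a : ℕ → ℚ) (h0 : a 0 = 1) (h1 : a 1 = -1)
    (hrec : ∀ n, 3 ≤ n →
      2 * a n = -((∑ k ∈ range (n - 1), a k * ((n - 1).choose k : ℚ) * 2 ^ (n - 1 - k)) +
        ∑ k ∈ range n, a k * (n.choose k : ℚ) * 2 ^ (n - k))) (n : ℕ) :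
    binomSum (fun k => a k / 2 ^ k) n 0 = (-1) ^ n * (a n / 2 ^ n) := by
  induction n using Nat.strong_induction_on with
  | _ n ih =>
  rcases n.even_or_odd with hn | ⟨t, rfl⟩
  · rw [hn.neg_one_pow, one_mul]
    exact binomSum_zero_right_of_even _ hn ih
  rcases t with _ | t
  · norm_num [binomSum, sum_range_succ, h0, h1]
  have hprev := ih (2 * (t + 1)) (by omega)
  rw [(even_two_mul _).neg_one_pow, one_mul] at hprev
  have hr := hrec (2 * (t + 1) + 1) (by omega)
  rw [Nat.add_sub_cancel, sum_range_mul_choose_mul_two_pow, sum_range_mul_choose_mul_two_pow,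
    hprev, sub_self, mul_zero, zero_add] at hr
  rw [Odd.neg_one_pow (odd_two_mul_add_one _)]
  field_simp at hr ⊢
  linarith

theorem stmt_14_general (a : ℕ → ℚ)
    (h0 : a 0 = 1) (h1 : a 1 = -1)
    (hrec : ∀ n, 3 ≤ n →
      2 * a n = -((∑ k ∈ Finset.range (n - 1), a k * ((n - 1).choose k : ℚ) * 2 ^ (n - 1 - k)) +
        ∑ k ∈ Finset.range n, a k * (n.choose k : ℚ) * 2 ^ (n - k)))
    (c : ℕ → ℕ → ℚ)
    (hc : ∀ j d, c j d = ∑ k ∈ Finset.Icc j d,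
      ((d - j).choose (d - k) : ℚ) * a k / 2 ^ k) :
    ∀ d, 2 ≤ d → ∀ j, j ≤ d → c j d = (-1) ^ d * c (d - j) d := by
  intro d _ j hj
  simp_rw [hc, mul_div_assoc]
  rw [sum_Icc_choose_mul_eq_binomSum _ hj, sum_Icc_choose_mul_eq_binomSum _ (Nat.sub_le d j),
    Nat.sub_sub_self hj, binomSum_symm _ (binomSum_zero_right_of_recursion a h0 h1 hrec),
    Nat.sub_add_cancel hj]

theorem stmt_14 (A : ℚ) (a : ℕ → ℚ)
    (h0 : a 0 = 1) (h1 : a 1 = -1) (h2 : a 2 = A)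
    (hrec : ∀ n, 3 ≤ n →
      2 * a n = -((∑ k ∈ Finset.range (n - 1), a k * ((n - 1).choose k : ℚ) * 2 ^ (n - 1 - k)) +
        ∑ k ∈ Finset.range n, a k * (n.choose k : ℚ) * 2 ^ (n - k)))
    (c : ℕ → ℕ → ℚ)
    (hc : ∀ j d, c j d = ∑ k ∈ Finset.Icc j d,
      ((d - j).choose (d - k) : ℚ) * a k / 2 ^ k) :
    ∀ d, 2 ≤ d → ∀ j, j ≤ d → c j d = (-1) ^ d * c (d - j) d :=
  stmt_14_general a h0 h1 hrec c hc
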